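/- arXiv:2402.06821 — 5 statements merged into one kernel-verified Lean document; each statement's English description precedes it below -/
import Mathlib

section
/- Completeness of the main reduction (Claim 1 in the proof of Theorem 4.6): Let B be a finite σ-structure, k, L ≥ 1, ρ_1, …, ρ_L : B → [k] × [k] arbitrary mappings, G a finite simple graph, and let X = X(B, (ρ_i)_{i=1}^L, G, k) be the structure from the main construction. If G contains a clique of size k, then there exists a homomorphism from B to X. -/
/-- A relational structure over signature `σ` with arities `ar` and universe `A`. -/
structure RelStruct (σ : Type) (ar : σ → ℕ) (A : Type) where
  rel : ∀ R : σ, Set (Fin (ar R) → A)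

/-- `f` is a homomorphism of relational structures from `SA` to `SB`. -/
def IsHom {σ : Type} {ar : σ → ℕ} {A B : Type}
    (SA : RelStruct σ ar A) (SB : RelStruct σ ar B) (f : A → B) : Prop :=
  ∀ (R : σ) (t : Fin (ar R) → A), t ∈ SA.rel R → (fun j => f (t j)) ∈ SB.rel R

/-- The Gaifman (primal) graph of a relational structure. -/
def Gaifman {σ : Type} {ar : σ → ℕ} {A : Type} (SA : RelStruct σ ar A) : SimpleGraph A where
  Adj a b := a ≠ b ∧ ∃ (R : σ) (t : Fin (ar R) → A),
      t ∈ SA.rel R ∧ a ∈ Set.range t ∧ b ∈ Set.range t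
  symm := by
    constructor
    rintro a b ⟨hab, R, t, ht, ha, hb⟩
    exact ⟨hab.symm, R, t, ht, hb, ha⟩
  loopless := by
    constructor
    rintro a ⟨ha, -⟩
    exact ha rfl

/-- `ρ` is a grid-like mapping from the vertex set of the graph `G` onto `[k] × [k]`:
it is surjective and all the preimages of its two components are connected in `G`. -/
def GridLikeOn {C : Type} (G : SimpleGraph C) (k : ℕ) (ρ : C → Fin k × Fin k) : Prop :=
  Function.Surjective ρ ∧ ∀ i : Fin k,
    (G.induce {c | (ρ c).1 = i}).Connected ∧
    (G.induce {c | (ρ c).2 = i}).Connected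

/-- `ρ` is a grid-like mapping from the structure `SC` onto `[k] × [k]`. -/
def GridLike {σ : Type} {ar : σ → ℕ} {C : Type}
    (SC : RelStruct σ ar C) (k : ℕ) (ρ : C → Fin k × Fin k) : Prop :=
  GridLikeOn (Gaifman SC) k ρ

/-- `G` contains a clique of size `k`. -/
def HasNClique {V : Type} (G : SimpleGraph V) (k : ℕ) : Prop :=
  ∃ s : Finset V, G.IsNClique k s

/-- The condition defining the universe of the structure `X` of the main construction. -/
def XOk {B V : Type} (k L : ℕ) (ρ : Fin L → B → Fin k × Fin k) (G : SimpleGraph V)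
    (x : B × (Fin L → V × V)) : Prop :=
  ∀ i : Fin L,
    ((ρ i x.1).1 = (ρ i x.1).2 → (x.2 i).1 = (x.2 i).2) ∧
    ((ρ i x.1).1 ≠ (ρ i x.1).2 → G.Adj (x.2 i).1 (x.2 i).2)

/-- The structure `X = X(B, (ρ_i)_{i=1}^L, G, k)` of the main construction. -/
def XStruct {σ : Type} {ar : σ → ℕ} {B V : Type} (SB : RelStruct σ ar B) (k L : ℕ)
    (ρ : Fin L → B → Fin k × Fin k) (G : SimpleGraph V) :
    RelStruct σ ar {x : B × (Fin L → V × V) // XOk k L ρ G x} where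
  rel R := {t |
    (fun j => (t j).1.1) ∈ SB.rel R ∧
    ∀ (j j' : Fin (ar R)) (i : Fin L),
      ((ρ i (t j).1.1).1 = (ρ i (t j').1.1).1 → ((t j).1.2 i).1 = ((t j').1.2 i).1) ∧
      ((ρ i (t j).1.1).2 = (ρ i (t j').1.1).2 → ((t j).1.2 i).2 = ((t j').1.2 i).2)}

/- A `k`-clique of `G`, seen as a homomorphism `φ` from the complete graph on `[k]`, lets every
`b` choose the pair `(φ (ρ_i¹ b), φ (ρ_i² b))` in each coordinate `i`. These pairs depend on `b`
only through the labels `ρ_i b`, so the consistency conditions of `X` hold automatically, and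
distinct labels are sent to adjacent vertices. -/

section CliqueLift

open SimpleGraph

variable {σ : Type} {ar : σ → ℕ} {B V : Type} {k L : ℕ} {ρ : Fin L → B → Fin k × Fin k}
  {G : SimpleGraph V}

theorem xOk_of_completeGraph_hom (φ : completeGraph (Fin k) →g G) (b : B) :
    XOk k L ρ G (b, fun i => (φ (ρ i b).1, φ (ρ i b).2)) := fun _ =>
  ⟨fun h => congrArg φ h, fun h => φ.map_adj h⟩

def cliqueLift (φ : completeGraph (Fin k) →g G) (b : B) :
    {x : B × (Fin L → V × V) // XOk k L ρ G x} :=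
  ⟨(b, fun i => (φ (ρ i b).1, φ (ρ i b).2)), xOk_of_completeGraph_hom φ b⟩

theorem isHom_cliqueLift (SB : RelStruct σ ar B) (φ : completeGraph (Fin k) →g G) :
    IsHom SB (XStruct SB k L ρ G) (cliqueLift φ) := fun _ _ ht =>
  ⟨ht, fun _ _ _ => ⟨fun h => congrArg φ h, fun h => congrArg φ h⟩⟩

end CliqueLift

theorem completeness_of_main_reduction_general
    {σ : Type} {ar : σ → ℕ} {B V : Type}
    (SB : RelStruct σ ar B) (k L : ℕ)
    (ρ : Fin L → B → Fin k × Fin k) (G : SimpleGraph V)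
    (hclique : HasNClique G k) :
    ∃ f : B → {x : B × (Fin L → V × V) // XOk k L ρ G x},
      IsHom SB (XStruct SB k L ρ G) f := by
  obtain ⟨s, hs⟩ := hclique
  exact ⟨cliqueLift (SimpleGraph.topEmbeddingOfNotCliqueFree hs.not_cliqueFree).toHom,
    isHom_cliqueLift SB _⟩

/-- Completeness of the main reduction (Claim 1 in the proof of Theorem 4.6).
If `G` contains a clique of size `k`, then there is a homomorphism from `B` to
`X = X(B, (ρ_i)_{i=1}^L, G, k)`. -/
theorem completeness_of_main_reduction
    {σ : Type} {ar : σ → ℕ} {B V : Type} [Finite σ] [Finite B] [Finite V]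
    (SB : RelStruct σ ar B) (k L : ℕ) (hk : 1 ≤ k) (hL : 1 ≤ L)
    (ρ : Fin L → B → Fin k × Fin k) (G : SimpleGraph V)
    (hclique : HasNClique G k) :
    ∃ f : B → {x : B × (Fin L → V × V) // XOk k L ρ G x},
      IsHom SB (XStruct SB k L ρ G) f :=
  completeness_of_main_reduction_general SB k L ρ G hclique
end

section
/- Soundness of the main reduction (from the proof of Theorem 4.6): Let B be a finite σ-structure, k, L ≥ 1, ρ_1, …, ρ_L : B → [k] × [k], G a finite simple graph, and X = X(B, (ρ_i)_{i=1}^L, G, k) the structure from the main construction. Let A be a finite σ-structure and α : A → X a homomorphism. Suppose there exist a finite σ-structure C, a homomorphism h : C → A, and l ∈ [L] such that ρ_l ∘ Π ∘ α ∘ h is a grid-like mapping from C onto [k] × [k]. Then G contains a clique of size k. -/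
/-! Write `(u c, v c)` for the `l`-th vertex pair that `α ∘ h` attaches to `c ∈ C`. The relations
of `X` force `u` to agree along Gaifman edges inside a row of the grid and `v` inside a column, so
connectivity of rows and columns makes `u` a function of the row and `v` a function of the column.
On the diagonal `u = v`, so both are the same function `U : [k] → V(G)`, and the cell `(i, j)` with
`i ≠ j` makes `U i` and `U j` adjacent: `U` is a `k`-clique. -/

namespace SimpleGraph

variable {V α : Type*} {G : SimpleGraph V}

theorem eq_of_connected_induce {s : Set V} (hs : (G.induce s).Connected) {f : V → α}
    (hf : ∀ a ∈ s, ∀ b ∈ s, G.Adj a b → f a = f b) {a b : V} (ha : a ∈ s) (hb : b ∈ s) :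
    f a = f b := by
  suffices ∀ x y : s, (G.induce s).Walk x y → f x = f y from this ⟨a, ha⟩ ⟨b, hb⟩ (hs _ _).some
  intro x y w
  induction w with
  | nil => rfl
  | cons hadj _ ih => exact (hf _ (Subtype.prop _) _ (Subtype.prop _) hadj).trans ih

theorem eq_of_connected_fibers {ι : Type*} {π : V → ι}
    (hπ : ∀ i, (G.induce {c | π c = i}).Connected) {f : V → α}
    (hf : ∀ c c', G.Adj c c' → π c = π c' → f c = f c') {c c' : V} (h : π c = π c') :
    f c = f c' :=
  eq_of_connected_induce (hπ (π c)) (fun a ha b hb hab => hf a b hab (ha.trans hb.symm))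
    rfl h.symm

end SimpleGraph

open SimpleGraph

theorem hasNClique_of_pairwise_adj {V : Type} {G : SimpleGraph V} {n : ℕ} {f : Fin n → V}
    (hf : Pairwise fun i j => G.Adj (f i) (f j)) : HasNClique G n := by
  let φ : (⊤ : SimpleGraph (Fin n)) →g G := ⟨f, fun hij => hf hij⟩
  exact ⟨_, by simpa using isNClique_map_copy_top ⟨φ, φ.injective_of_top_hom⟩⟩

theorem GridLikeOn.hasNClique {C V : Type} {H : SimpleGraph C} {G : SimpleGraph V} {k : ℕ}
    {β : C → Fin k × Fin k} (hβ : GridLikeOn H k β) {u v : C → V}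
    (hu : ∀ c c', H.Adj c c' → (β c).1 = (β c').1 → u c = u c')
    (hv : ∀ c c', H.Adj c c' → (β c).2 = (β c').2 → v c = v c')
    (hdiag : ∀ c, (β c).1 = (β c).2 → u c = v c)
    (hoff : ∀ c, (β c).1 ≠ (β c).2 → G.Adj (u c) (v c)) :
    HasNClique G k := by
  obtain ⟨cell, hcell⟩ := hβ.1.hasRightInverse
  have hrow {i j j'} : u (cell (i, j)) = u (cell (i, j')) :=
    eq_of_connected_fibers (fun i => (hβ.2 i).1) hu (by rw [hcell, hcell])
  have hcol {i i' j} : v (cell (i, j)) = v (cell (i', j)) :=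
    eq_of_connected_fibers (fun i => (hβ.2 i).2) hv (by rw [hcell, hcell])
  have hadj : Pairwise fun i j => G.Adj (u (cell (i, i))) (u (cell (j, j))) := by
    intro i j hij
    have h := hoff (cell (i, j)) (by rwa [hcell])
    rwa [hrow, hcol, ← hdiag _ (by rw [hcell])] at h
  exact hasNClique_of_pairwise_adj hadj

section Hom

variable {σ : Type} {ar : σ → ℕ}

theorem IsHom.comp {A B C : Type} {SA : RelStruct σ ar A} {SB : RelStruct σ ar B}
    {SC : RelStruct σ ar C} {g : B → C} {f : A → B} (hg : IsHom SB SC g) (hf : IsHom SA SB f) :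
    IsHom SA SC (g ∘ f) :=
  fun R t ht => hg R _ (hf R t ht)

theorem IsHom.agree_of_adj_gaifman {B C V : Type} {SB : RelStruct σ ar B}
    {SC : RelStruct σ ar C} {k L : ℕ} {ρ : Fin L → B → Fin k × Fin k} {G : SimpleGraph V}
    {f : C → {x : B × (Fin L → V × V) // XOk k L ρ G x}} (hf : IsHom SC (XStruct SB k L ρ G) f)
    {c c' : C} (hcc' : (Gaifman SC).Adj c c') (i : Fin L) :
    ((ρ i (f c).1.1).1 = (ρ i (f c').1.1).1 → ((f c).1.2 i).1 = ((f c').1.2 i).1) ∧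
    ((ρ i (f c).1.1).2 = (ρ i (f c').1.1).2 → ((f c).1.2 i).2 = ((f c').1.2 i).2) := by
  obtain ⟨-, R, t, ht, ⟨j, rfl⟩, ⟨j', rfl⟩⟩ := hcc'
  exact (hf R t ht).2 j j' i

end Hom

theorem soundness_of_main_reduction_general
    {σ : Type} {ar : σ → ℕ} {A B C V : Type}
    (SB : RelStruct σ ar B) (k L : ℕ)
    (ρ : Fin L → B → Fin k × Fin k) (G : SimpleGraph V)
    (SA : RelStruct σ ar A)
    (α : A → {x : B × (Fin L → V × V) // XOk k L ρ G x})
    (hα : IsHom SA (XStruct SB k L ρ G) α)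
    (SC : RelStruct σ ar C) (h : C → A) (hh : IsHom SC SA h)
    (l : Fin L)
    (hgrid : GridLike SC k (fun c => ρ l ((α (h c)).1.1))) :
    HasNClique G k := by
  have hαh := hα.comp hh
  exact hgrid.hasNClique
    (fun c c' hcc' => (hαh.agree_of_adj_gaifman hcc' l).1)
    (fun c c' hcc' => (hαh.agree_of_adj_gaifman hcc' l).2)
    (fun c => ((α (h c)).2 l).1) (fun c => ((α (h c)).2 l).2)

/-- Soundness of the main reduction (from the proof of Theorem 4.6).
If `α : A → X` is a homomorphism and there are a finite structure `C`, a homomorphism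
`h : C → A`, and `l ∈ [L]` such that `ρ_l ∘ Π ∘ α ∘ h` is a grid-like mapping from `C`
onto `[k] × [k]`, then `G` contains a clique of size `k`. -/
theorem soundness_of_main_reduction
    {σ : Type} {ar : σ → ℕ} {A B C V : Type}
    [Finite σ] [Finite A] [Finite B] [Finite C] [Finite V]
    (SB : RelStruct σ ar B) (k L : ℕ) (hk : 1 ≤ k) (hL : 1 ≤ L)
    (ρ : Fin L → B → Fin k × Fin k) (G : SimpleGraph V)
    (SA : RelStruct σ ar A)
    (α : A → {x : B × (Fin L → V × V) // XOk k L ρ G x})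
    (hα : IsHom SA (XStruct SB k L ρ G) α)
    (SC : RelStruct σ ar C) (h : C → A) (hh : IsHom SC SA h)
    (l : Fin L)
    (hgrid : GridLike SC k (fun c => ρ l ((α (h c)).1.1))) :
    HasNClique G k :=
  soundness_of_main_reduction_general SB k L ρ G SA α hα SC h hh l hgrid
end

section
/- Lemma 3.1 (Grohe's completeness lemma): Let k ≥ 2, K = k(k−1)/2, let A be a connected finite σ-structure, μ a minor map from the (k × K)-grid onto A, G a finite simple graph, and M = M(A, μ, G) the structure from Grohe's construction. If G contains a clique of size k, then there is a homomorphism from A to M. -/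
/-- The `(k × l)`-grid graph: vertices `[k] × [l]`, with `(i,j)` and `(i',j')`
adjacent iff `|i - i'| + |j - j'| = 1`. -/
def gridGraph (k l : ℕ) : SimpleGraph (Fin k × Fin l) where
  Adj p q := ((p.1 : ℤ) - (q.1 : ℤ)).natAbs + ((p.2 : ℤ) - (q.2 : ℤ)).natAbs = 1
  symm := by
    constructor
    intro p q h
    omega
  loopless := by
    constructor
    intro p h
    simp at h

/-- `μ` is a minor map from the graph `GH` to the graph `GG`. -/
def IsMinorMap {H G : Type} (GH : SimpleGraph H) (GG : SimpleGraph G) (μ : H → Set G) : Prop :=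
  (∀ v, (μ v).Nonempty ∧ (GG.induce (μ v)).Connected) ∧
  (∀ v w, v ≠ w → Disjoint (μ v) (μ w)) ∧
  (∀ v w, GH.Adj v w → ∃ v' ∈ μ v, ∃ w' ∈ μ w, GG.Adj v' w')

/-- The universe of the structure `M = M(A, μ, G)` of Grohe's construction: tuples
`(v, e, i, p, a)` with `v` a vertex of `G`, `e` an edge of `G`, `i ∈ [k]`, `p ∈ [K]`,
`v ∈ e ↔ i ∈ ρ₂(p)`, and `a ∈ μ(i, p)`. -/
structure MElem {V A : Type} (G : SimpleGraph V) (k K : ℕ)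
    (ρ₂ : Fin K ≃ {s : Finset (Fin k) // s.card = 2}) (μ : Fin k × Fin K → Set A) where
  v : V
  e : Sym2 V
  i : Fin k
  p : Fin K
  a : A
  he : e ∈ G.edgeSet
  hvi : v ∈ e ↔ i ∈ (ρ₂ p).1
  ha : a ∈ μ (i, p)

/-- The structure `M = M(A, μ, G)` of Grohe's construction. -/
def MStruct {σ : Type} {ar : σ → ℕ} {V A : Type} (SA : RelStruct σ ar A)
    (G : SimpleGraph V) (k K : ℕ)
    (ρ₂ : Fin K ≃ {s : Finset (Fin k) // s.card = 2})
    (μ : Fin k × Fin K → Set A) :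
    RelStruct σ ar (MElem G k K ρ₂ μ) where
  rel R := {t |
    (fun j => (t j).a) ∈ SA.rel R ∧
    ∀ j j' : Fin (ar R),
      ((t j).i = (t j').i → (t j).v = (t j').v) ∧
      ((t j).p = (t j').p → (t j).e = (t j').e)}

/-!
Fix a `k`-clique `v₁, …, vₖ` of `G` and, for each `p`, let `eₚ` be the edge of the clique
joining the two vertices indexed by `ρ(p)`, so that `vᵢ ∈ eₚ ↔ i ∈ ρ(p)`. Sending `a ∈ μ(i, p)`
to `(vᵢ, eₚ, i, p, a)` is then a section of the projection `Π`, and it preserves every relation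
because its vertex coordinate depends only on `i` and its edge coordinate only on `p`.
-/

namespace SimpleGraph

variable {V W : Type*} [DecidableEq W] {G : SimpleGraph V}

theorem Embedding.exists_edge_mem_iff_of_card_eq_two (φ : (⊤ : SimpleGraph W) ↪g G)
    {s : Finset W} (hs : s.card = 2) : ∃ e ∈ G.edgeSet, ∀ w, φ w ∈ e ↔ w ∈ s := by
  obtain ⟨x, y, hxy, hs⟩ := Finset.card_eq_two.mp hs
  subst hs
  refine ⟨s(φ x, φ y), φ.map_adj_iff.mpr hxy, fun w => ?_⟩
  simp only [Sym2.mem_iff, φ.injective.eq_iff, Finset.mem_insert, Finset.mem_singleton]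

end SimpleGraph

section GroheConstruction

variable {σ : Type} {ar : σ → ℕ} {A V : Type} (SA : RelStruct σ ar A) {G : SimpleGraph V}
  {k K : ℕ} {ρ₂ : Fin K ≃ {s : Finset (Fin k) // s.card = 2}} {μ : Fin k × Fin K → Set A}

theorem isHom_mStruct_of_section {f : A → MElem G k K ρ₂ μ} (vertex : Fin k → V)
    (edge : Fin K → Sym2 V) (hf : ∀ a, (f a).a = a) (hv : ∀ a, (f a).v = vertex (f a).i)
    (he : ∀ a, (f a).e = edge (f a).p) : IsHom SA (MStruct SA G k K ρ₂ μ) f := by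
  intro R t ht
  refine ⟨by simpa only [hf] using ht, fun j j' => ⟨fun hi => ?_, fun hp => ?_⟩⟩
  · rw [hv, hv, hi]
  · rw [he, he, hp]

end GroheConstruction

theorem grohe_completeness_general
    {σ : Type} {ar : σ → ℕ} {A V : Type}
    (SA : RelStruct σ ar A) (G : SimpleGraph V)
    (k K : ℕ)
    (ρ₂ : Fin K ≃ {s : Finset (Fin k) // s.card = 2})
    (μ : Fin k × Fin K → Set A)
    (honto : ∀ a : A, ∃ ip : Fin k × Fin K, a ∈ μ ip)
    (hclique : HasNClique G k) :
    ∃ f : A → MElem G k K ρ₂ μ, IsHom SA (MStruct SA G k K ρ₂ μ) f := by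
  obtain ⟨s, hs⟩ := hclique
  let φ := SimpleGraph.topEmbeddingOfNotCliqueFree hs.not_cliqueFree
  choose edge hedge hmem using fun p => φ.exists_edge_mem_iff_of_card_eq_two (ρ₂ p).2
  choose cell hcell using honto
  refine ⟨fun a => ⟨φ (cell a).1, edge (cell a).2, (cell a).1, (cell a).2, a,
    hedge _, hmem _ _, hcell a⟩, ?_⟩
  exact isHom_mStruct_of_section SA (fun i => φ i) edge (fun _ => rfl) (fun _ => rfl)
    (fun _ => rfl)

/-- Lemma 3.1 (Grohe's completeness lemma). If `G` contains a clique of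
size `k`, then there is a homomorphism from `A` to `M = M(A, μ, G)`. -/
theorem grohe_completeness
    {σ : Type} {ar : σ → ℕ} {A V : Type} [Finite σ] [Finite A] [Finite V]
    (SA : RelStruct σ ar A) (G : SimpleGraph V)
    (k K : ℕ) (hk : 2 ≤ k) (hK : K = k * (k - 1) / 2)
    (ρ₂ : Fin K ≃ {s : Finset (Fin k) // s.card = 2})
    (hconn : (Gaifman SA).Connected)
    (μ : Fin k × Fin K → Set A)
    (hμ : IsMinorMap (gridGraph k K) (Gaifman SA) μ)
    (honto : ∀ a : A, ∃ ip : Fin k × Fin K, a ∈ μ ip)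
    (hclique : HasNClique G k) :
    ∃ f : A → MElem G k K ρ₂ μ, IsHom SA (MStruct SA G k K ρ₂ μ) f :=
  grohe_completeness_general SA G k K ρ₂ μ honto hclique
end

section
/- Combinatorial content of the second Corollary to Theorem 4.6: Let A and B be finite σ-structures, let k, L ≥ 1, let ν be a grid-like mapping from A onto [k] × [k], and let g_1, …, g_L : A → B be injective homomorphisms such that for every homomorphism g : A → B there exist a homomorphism h : A → A and l ∈ [L] with g ∘ h = g_l. Then there exist mappings ρ_1, …, ρ_L : B → [k] × [k] such that for every homomorphism g : A → B there exist a homomorphism h : A → A and l ∈ [L] such that ρ_l ∘ g ∘ h is a grid-like mapping from A onto [k] × [k]. -/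
theorem second_corollary_combinatorial_general
    {σ : Type} {ar : σ → ℕ} {A B : Type}
    (SA : RelStruct σ ar A) (SB : RelStruct σ ar B)
    (k L : ℕ) (hk : 1 ≤ k)
    (ν : A → Fin k × Fin k) (hν : GridLike SA k ν)
    (g₀ : Fin L → A → B)
    (hg₀inj : ∀ l : Fin L, Function.Injective (g₀ l))
    (hfact : ∀ g : A → B, IsHom SA SB g →
      ∃ h : A → A, IsHom SA SA h ∧ ∃ l : Fin L, g ∘ h = g₀ l) :
    ∃ ρ : Fin L → B → Fin k × Fin k,
      ∀ g : A → B, IsHom SA SB g →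
        ∃ h : A → A, IsHom SA SA h ∧
          ∃ l : Fin L, GridLike SA k (fun a => ρ l (g (h a))) := by
  -- `ρ l` extends `ν` along the injective `g₀ l`, so `ρ l ∘ g ∘ h = ρ l ∘ g₀ l = ν`.
  let c : Fin k × Fin k := (⟨0, hk⟩, ⟨0, hk⟩)
  refine ⟨fun l => Function.extend (g₀ l) ν fun _ => c, fun g hg => ?_⟩
  obtain ⟨h, hh, l, hgl⟩ := hfact g hg
  have hρ : Function.extend (g₀ l) ν (fun _ => c) ∘ (g ∘ h) = ν := by
    rw [hgl, Function.extend_comp (hg₀inj l)]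
  exact ⟨h, hh, l, (congrArg (GridLike SA k) hρ).mpr hν⟩

/-- Combinatorial content of the second Corollary to Theorem 4.6. -/
theorem second_corollary_combinatorial
    {σ : Type} {ar : σ → ℕ} {A B : Type} [Finite σ] [Finite A] [Finite B]
    (SA : RelStruct σ ar A) (SB : RelStruct σ ar B)
    (k L : ℕ) (hk : 1 ≤ k) (hL : 1 ≤ L)
    (ν : A → Fin k × Fin k) (hν : GridLike SA k ν)
    (g₀ : Fin L → A → B)
    (hg₀hom : ∀ l : Fin L, IsHom SA SB (g₀ l))
    (hg₀inj : ∀ l : Fin L, Function.Injective (g₀ l))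
    (hfact : ∀ g : A → B, IsHom SA SB g →
      ∃ h : A → A, IsHom SA SA h ∧ ∃ l : Fin L, g ∘ h = g₀ l) :
    ∃ ρ : Fin L → B → Fin k × Fin k,
      ∀ g : A → B, IsHom SA SB g →
        ∃ h : A → A, IsHom SA SA h ∧
          ∃ l : Fin L, GridLike SA k (fun a => ρ l (g (h a))) :=
  second_corollary_combinatorial_general SA SB k L hk ν hν g₀ hg₀inj hfact
end

section
/- Classification of injective homomorphisms between grid graphs (claim in the Example of Section 4): Let 1 ≤ k ≤ m and let g be an injective graph homomorphism from the (k × k)-grid with vertex set {0, 1, …, k−1}² to the (m × m)-grid with vertex set {0, 1, …, m−1}². Then there exist integers a, a' and signs s, s' ∈ {1, −1} such that either g(i,j) = (a + s·i, a' + s'·j) for all (i,j), or g(i,j) = (a + s·j, a' + s'·i) for all (i,j). -/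
def IsUnitVec (v : ℤ × ℤ) : Prop := v.1.natAbs + v.2.natAbs = 1

theorem isUnitVec_iff {v : ℤ × ℤ} :
    IsUnitVec v ↔ v = (1, 0) ∨ v = (-1, 0) ∨ v = (0, 1) ∨ v = (0, -1) := by
  obtain ⟨a, b⟩ := v
  simp only [IsUnitVec, Prod.mk.injEq]
  omega

/-- A nonzero sum of two unit vectors determines the summands up to order. -/
theorem IsUnitVec.eq_of_add_eq_add {x y z w : ℤ × ℤ} (hx : IsUnitVec x) (hy : IsUnitVec y)
    (hz : IsUnitVec z) (hw : IsUnitVec w) (h : x + y = w + z) (h₀ : x + y ≠ 0) (hxw : x ≠ w) :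
    z = x := by
  rw [isUnitVec_iff] at hx hy hz hw
  rcases hx with rfl | rfl | rfl | rfl <;> rcases hy with rfl | rfl | rfl | rfl <;>
    rcases hz with rfl | rfl | rfl | rfl <;> rcases hw with rfl | rfl | rfl | rfl <;>
    simp_all

/-- For unit vectors, `u ≠ w ∧ u ≠ -w` means `u ⟂ w`. -/
theorem IsUnitVec.eq_of_orthogonal {u u' w : ℤ × ℤ} (hu : IsUnitVec u) (hu' : IsUnitVec u')
    (hw : IsUnitVec w) (huw : u ≠ w ∧ u ≠ -w) (hu'w : u' ≠ w ∧ u' ≠ -w) (h₀ : u + u' ≠ 0) :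
    u = u' := by
  rw [isUnitVec_iff] at hu hu' hw
  rcases hu with rfl | rfl | rfl | rfl <;> rcases hu' with rfl | rfl | rfl | rfl <;>
    rcases hw with rfl | rfl | rfl | rfl <;> simp_all

theorem IsUnitVec.axes_of_orthogonal {u v : ℤ × ℤ} (hu : IsUnitVec u) (hv : IsUnitVec v)
    (huv : u ≠ v ∧ u ≠ -v) :
    ∃ s s' : ℤ, (s = 1 ∨ s = -1) ∧ (s' = 1 ∨ s' = -1) ∧
      (u = (s, 0) ∧ v = (0, s') ∨ u = (0, s') ∧ v = (s, 0)) := by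
  rw [isUnitVec_iff] at hu hv
  rcases hu with rfl | rfl | rfl | rfl <;> rcases hv with rfl | rfl | rfl | rfl <;> simp_all

/-- Only the values of `f` on `[0, k) × [0, l)` matter. -/
structure IsGridEmbedding (k l : ℕ) (f : ℕ → ℕ → ℤ × ℤ) : Prop where
  isUnitVec_step_fst : ∀ ⦃i j⦄, i + 1 < k → j < l → IsUnitVec (f (i + 1) j - f i j)
  isUnitVec_step_snd : ∀ ⦃i j⦄, i < k → j + 1 < l → IsUnitVec (f i (j + 1) - f i j)
  injOn : ∀ ⦃i j i' j'⦄, i < k → j < l → i' < k → j' < l → f i j = f i' j' → i = i' ∧ j = j'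

namespace IsGridEmbedding

variable {k l : ℕ} {f : ℕ → ℕ → ℤ × ℤ}

theorem swap (hf : IsGridEmbedding k l f) : IsGridEmbedding l k (fun j i => f i j) where
  isUnitVec_step_fst _ _ hj hi := hf.isUnitVec_step_snd hi hj
  isUnitVec_step_snd _ _ hj hi := hf.isUnitVec_step_fst hi hj
  injOn _ _ _ _ hj hi hj' hi' h := (hf.injOn hi hj hi' hj' h).symm

theorem ne (hf : IsGridEmbedding k l f) {i j i' j' : ℕ} (hi : i < k) (hj : j < l)
    (hi' : i' < k) (hj' : j' < l) (h : i ≠ i' ∨ j ≠ j') : f i j ≠ f i' j' := by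
  intro e
  have := hf.injOn hi hj hi' hj' e
  tauto

theorem sub_eq_sub_of_square (hf : IsGridEmbedding k l f) {i j : ℕ} (hi : i + 1 < k)
    (hj : j + 1 < l) : f (i + 1) (j + 1) - f i (j + 1) = f (i + 1) j - f i j :=
  IsUnitVec.eq_of_add_eq_add (hf.isUnitVec_step_fst (j := j) hi (by omega))
    (hf.isUnitVec_step_snd hi hj) (hf.isUnitVec_step_fst hi hj)
    (hf.isUnitVec_step_snd (i := i) (by omega) hj) (by abel)
    (by simpa [sub_eq_zero] using
      hf.ne (i' := i) (j' := j) hi hj (by omega) (by omega) (by omega))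
    (by simpa [sub_eq_zero] using
      hf.ne (i' := i) (j' := j + 1) hi (by omega) (by omega) hj (by omega))

theorem steps_orthogonal (hf : IsGridEmbedding k l f) {i j : ℕ} (hi : i + 1 < k)
    (hj : j + 1 < l) :
    f (i + 1) j - f i j ≠ f i (j + 1) - f i j ∧ f (i + 1) j - f i j ≠ -(f i (j + 1) - f i j) := by
  refine ⟨fun h => hf.ne hi (by omega) (by omega) hj (by omega) (sub_left_inj.mp h), fun h => ?_⟩
  have hsq := hf.swap.sub_eq_sub_of_square hj hi
  refine hf.ne (i' := i) (j' := j) hi hj (by omega) (by omega) (by omega) ?_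
  beta_reduce at hsq
  linear_combination hsq + h

theorem sub_eq_sub_of_straight (hf : IsGridEmbedding k l f) {i j : ℕ} (hi : i + 2 < k)
    (hj : j + 1 < l) : f (i + 2) j - f (i + 1) j = f (i + 1) j - f i j := by
  have hup : f (i + 1) (j + 1) - f (i + 1) j = f i (j + 1) - f i j :=
    hf.swap.sub_eq_sub_of_square hj (by omega)
  refine (IsUnitVec.eq_of_orthogonal (hf.isUnitVec_step_fst (by omega) (by omega))
    (hf.isUnitVec_step_fst (by omega) (by omega)) (hf.isUnitVec_step_snd (i := i) (by omega) hj)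
    (hf.steps_orthogonal (by omega) hj) (hup ▸ hf.steps_orthogonal (by omega) hj) ?_).symm
  simpa [sub_eq_zero] using hf.ne (i' := i) (j' := j) hi (by omega) (by omega) (by omega) (by omega)

theorem sub_eq_sub_zero_zero (hf : IsGridEmbedding k l f) (hl : 1 < l) {i j : ℕ} (hi : i + 1 < k)
    (hj : j < l) : f (i + 1) j - f i j = f 1 0 - f 0 0 := by
  induction j with
  | zero =>
    induction i with
    | zero => rfl
    | succ i ih => rw [hf.sub_eq_sub_of_straight hi hl, ih (by omega)]
  | succ j ih => rw [hf.sub_eq_sub_of_square hi hj, ih (by omega)]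

theorem eq_add_nsmul (hf : IsGridEmbedding k l f) (hl : 1 < l) {i j : ℕ} (hi : i < k)
    (hj : j < l) : f i j = f 0 j + i • (f 1 0 - f 0 0) := by
  induction i with
  | zero => simp
  | succ i ih =>
    rw [succ_nsmul, ← add_assoc, ← ih (by omega), ← hf.sub_eq_sub_zero_zero hl hi hj]
    abel

theorem eq_add_nsmul_add_nsmul (hf : IsGridEmbedding k l f) (hk : 1 < k) (hl : 1 < l) {i j : ℕ}
    (hi : i < k) (hj : j < l) : f i j = f 0 0 + i • (f 1 0 - f 0 0) + j • (f 0 1 - f 0 0) := by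
  rw [hf.eq_add_nsmul hl hi hj, hf.swap.eq_add_nsmul (i := j) (j := 0) hk hj (by omega),
    add_right_comm]

end IsGridEmbedding

section gridExtend

variable {k l m n : ℕ}

def gridCoords (p : Fin k × Fin l) : ℤ × ℤ := ((p.1 : ℕ), (p.2 : ℕ))

theorem gridGraph_adj_iff {p q : Fin k × Fin l} :
    (gridGraph k l).Adj p q ↔ IsUnitVec (gridCoords p - gridCoords q) :=
  Iff.rfl

/-- Extension by the junk value `0` off the grid, so that neighbours are reached by `i + 1`
in `ℕ`. -/
def gridExtend (g : Fin k × Fin l → Fin m × Fin n) (i j : ℕ) : ℤ × ℤ :=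
  if h : i < k ∧ j < l then gridCoords (g (⟨i, h.1⟩, ⟨j, h.2⟩)) else 0

theorem gridExtend_apply (g : Fin k × Fin l → Fin m × Fin n) (i : Fin k) (j : Fin l) :
    gridExtend g i j = gridCoords (g (i, j)) := by
  simp [gridExtend]

theorem isGridEmbedding_gridExtend {g : Fin k × Fin l → Fin m × Fin n}
    (hinj : Function.Injective g)
    (hhom : ∀ p q, (gridGraph k l).Adj p q → (gridGraph m n).Adj (g p) (g q)) :
    IsGridEmbedding k l (gridExtend g) where
  isUnitVec_step_fst i j hi hj := by
    have := hhom (⟨i + 1, hi⟩, ⟨j, hj⟩) (⟨i, by omega⟩, ⟨j, hj⟩) (by simp [gridGraph])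
    simpa [gridExtend, hi, hj, show i < k by omega, gridGraph_adj_iff] using this
  isUnitVec_step_snd i j hi hj := by
    have := hhom (⟨i, hi⟩, ⟨j + 1, hj⟩) (⟨i, hi⟩, ⟨j, by omega⟩) (by simp [gridGraph])
    simpa [gridExtend, hi, hj, show j < l by omega, gridGraph_adj_iff] using this
  injOn i j i' j' hi hj hi' hj' h := by
    have := @hinj (⟨i, hi⟩, ⟨j, hj⟩) (⟨i', hi'⟩, ⟨j', hj'⟩)
    simp_all [gridExtend, gridCoords, Prod.ext_iff, Fin.ext_iff]

end gridExtend

theorem injective_grid_homomorphism_classification_general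
    (k m : ℕ)
    (g : Fin k × Fin k → Fin m × Fin m)
    (hinj : Function.Injective g)
    (hhom : ∀ p q : Fin k × Fin k, (gridGraph k k).Adj p q → (gridGraph m m).Adj (g p) (g q)) :
    ∃ a a' s s' : ℤ, (s = 1 ∨ s = -1) ∧ (s' = 1 ∨ s' = -1) ∧
      ((∀ i j : Fin k,
          ((g (i, j)).1 : ℤ) = a + s * (i : ℤ) ∧ ((g (i, j)).2 : ℤ) = a' + s' * (j : ℤ)) ∨
       (∀ i j : Fin k,
          ((g (i, j)).1 : ℤ) = a + s * (j : ℤ) ∧ ((g (i, j)).2 : ℤ) = a' + s' * (i : ℤ))) := by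
  rcases k with _ | _ | k
  · exact ⟨0, 0, 1, 1, .inl rfl, .inl rfl, .inl fun i => i.elim0⟩
  · refine ⟨(g (0, 0)).1, (g (0, 0)).2, 1, 1, .inl rfl, .inl rfl, .inl fun i j => ?_⟩
    rw [Fin.fin_one_eq_zero i, Fin.fin_one_eq_zero j]
    simp
  have hk : 1 < k + 2 := by omega
  have hf := isGridEmbedding_gridExtend hinj hhom
  obtain ⟨s, s', hs, hs', hshape⟩ := IsUnitVec.axes_of_orthogonal
    (hf.isUnitVec_step_fst (j := 0) hk (by omega)) (hf.isUnitVec_step_snd (i := 0) (by omega) hk)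
    (hf.steps_orthogonal hk hk)
  have hg (i j : Fin (k + 2)) : gridCoords (g (i, j)) =
      gridExtend g 0 0 + (i : ℕ) • (gridExtend g 1 0 - gridExtend g 0 0) +
        (j : ℕ) • (gridExtend g 0 1 - gridExtend g 0 0) :=
    gridExtend_apply g i j ▸ hf.eq_add_nsmul_add_nsmul hk hk i.isLt j.isLt
  refine ⟨(gridExtend g 0 0).1, (gridExtend g 0 0).2, s, s', hs, hs', ?_⟩
  rcases hshape with ⟨hu, hv⟩ | ⟨hu, hv⟩
  · refine .inl fun i j => ?_
    simpa [hu, hv, gridCoords, Prod.ext_iff, mul_comm] using hg i j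
  · refine .inr fun i j => ?_
    simpa [hu, hv, gridCoords, Prod.ext_iff, mul_comm, and_comm] using hg i j

/-- Classification of injective homomorphisms between grid graphs
(claim in the Example of Section 4). Vertices of the `(k × k)`-grid are `Fin k × Fin k`,
representing `{0, …, k−1}²`. -/
theorem injective_grid_homomorphism_classification
    (k m : ℕ) (hk : 1 ≤ k) (hkm : k ≤ m)
    (g : Fin k × Fin k → Fin m × Fin m)
    (hinj : Function.Injective g)
    (hhom : ∀ p q : Fin k × Fin k, (gridGraph k k).Adj p q → (gridGraph m m).Adj (g p) (g q)) :
    ∃ a a' s s' : ℤ, (s = 1 ∨ s = -1) ∧ (s' = 1 ∨ s' = -1) ∧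
      ((∀ i j : Fin k,
          ((g (i, j)).1 : ℤ) = a + s * (i : ℤ) ∧ ((g (i, j)).2 : ℤ) = a' + s' * (j : ℤ)) ∨
       (∀ i j : Fin k,
          ((g (i, j)).1 : ℤ) = a + s * (j : ℤ) ∧ ((g (i, j)).2 : ℤ) = a' + s' * (i : ℤ))) :=
  injective_grid_homomorphism_classification_general k m g hinj hhom
end
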